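/- arXiv:1702.08488 — 5 statements merged into one kernel-verified Lean document; each statement's English description precedes it below -/
import Mathlib

section
/- Let V be a finite-dimensional complex vector space, φ a linear endomorphism of V, and t a nonzero complex number which is not a root of unity. Suppose there exists an invertible linear endomorphism ψ of V with ψ ∘ φ = t · (φ ∘ ψ) (equivalently ψ ∘ φ ∘ ψ⁻¹ = t·φ). Then there exists a family of subspaces (W_i)_{i∈ℤ} of V, all but finitely many equal to {0} and each invariant under ψ, such that V is the internal direct sum ⨁_{i∈ℤ} W_i and φ(W_i) ⊆ W_{i−1} for every i ∈ ℤ. -/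
/-!
The generalized eigenspaces of `ψ` give `V = ⨁_μ V_μ`, and `ψ φ = t φ ψ` makes `φ` map `V_μ`
into `V_{tμ}`. Since `ψ` is invertible only `μ ≠ 0` occurs, and since `t` has infinite order
in `ℂˣ` there is `F : ℂˣ → ℤ` with `F (t μ) = F μ - 1`. Grouping the `V_μ` along the fibres
of `F` gives the required grading.
-/

open Set

theorem pow_mul_eq_smul_mul_pow {R A : Type*} [CommSemiring R] [Semiring A] [Algebra R A]
    {a b c : A} {t : R} (h : a * c = t • (c * b)) (k : ℕ) :
    a ^ k * c = t ^ k • (c * b ^ k) := by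
  induction k with
  | zero => simp
  | succ k ih =>
    calc a ^ (k + 1) * c = a ^ k * (a * c) := by rw [pow_succ, mul_assoc]
      _ = t • ((a ^ k * c) * b) := by rw [h, mul_smul_comm, mul_assoc]
      _ = t ^ (k + 1) • (c * b ^ (k + 1)) := by
        rw [ih, smul_mul_assoc, smul_smul, ← pow_succ', mul_assoc, ← pow_succ]

namespace Module.End

variable {R M : Type*} [CommRing R] [AddCommGroup M] [Module R M]

theorem mapsTo_maxGenEigenspace_of_mul_eq_smul_mul {f g : End R M} {t : R}
    (h : f * g = t • (g * f)) (μ : R) :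
    MapsTo g (f.maxGenEigenspace μ) (f.maxGenEigenspace (t * μ)) := by
  intro x hx
  obtain ⟨k, hk⟩ := (mem_maxGenEigenspace f μ x).mp hx
  have hshift : (f - (t * μ) • 1) * g = t • (g * (f - μ • 1)) := by
    rw [sub_mul, mul_sub, smul_sub, h, smul_mul_assoc, one_mul, mul_smul_comm, mul_one, smul_smul]
  refine (mem_maxGenEigenspace f (t * μ) (g x)).mpr ⟨k, ?_⟩
  rw [← mul_apply, pow_mul_eq_smul_mul_pow hshift, LinearMap.smul_apply, mul_apply, hk, map_zero,
    smul_zero]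

theorem maxGenEigenspace_zero_eq_bot_of_injective {f : End R M} (hf : Function.Injective f) :
    f.maxGenEigenspace 0 = ⊥ := by
  refine eq_bot_iff.mpr fun x hx => ?_
  obtain ⟨k, hk⟩ := (mem_maxGenEigenspace f 0 x).mp hx
  rw [zero_smul, sub_zero, coe_pow] at hk
  exact (hf.iterate k).eq_iff' (iterate_map_zero f k) |>.mp hk

end End

end Module

theorem exists_map_mul_left_eq_add_one {G : Type*} [CommGroup G] {u : G} (hu : ¬IsOfFinOrder u) :
    ∃ F : G → ℤ, ∀ g, F (u * g) = F g + 1 := by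
  let H := Subgroup.zpowers u
  have hexp : ∀ g : G, ∃ n : ℤ, g = (QuotientGroup.mk g : G ⧸ H).out * u ^ n := fun g => by
    obtain ⟨n, hn⟩ := Subgroup.mem_zpowers_iff.mp
      (QuotientGroup.eq.mp (QuotientGroup.out_eq' (QuotientGroup.mk g : G ⧸ H)))
    exact ⟨n, by rw [hn, mul_inv_cancel_left]⟩
  choose F hF using hexp
  refine ⟨F, fun g => injective_zpow_iff_not_isOfFinOrder.mpr hu ?_⟩
  have hcoset : (QuotientGroup.mk (u * g) : G ⧸ H) = QuotientGroup.mk g :=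
    QuotientGroup.eq.mpr (by simp [H, Subgroup.mem_zpowers])
  have h := hF (u * g)
  rw [hcoset] at h
  refine mul_left_cancel (a := (QuotientGroup.mk g : G ⧸ H).out) ?_
  simp only [zpow_add_one]
  rw [← h, ← mul_assoc, ← hF g, mul_comm]

section Fibers

variable {α ι κ : Type*} [CompleteLattice α]

theorem iSup_biSup_fiber (f : ι → α) (g : ι → κ) :
    ⨆ k, ⨆ i ∈ g ⁻¹' {k}, f i = ⨆ i, f i := by
  simp only [mem_preimage, mem_singleton_iff]
  rw [iSup_comm]
  exact iSup_congr fun i => iSup_iSup_eq_right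

theorem iSupIndep.biSup_fiber [IsModularLattice α] [IsCompactlyGenerated α] {f : ι → α}
    (hf : iSupIndep f) (g : ι → κ) : iSupIndep fun k => ⨆ i ∈ g ⁻¹' {k}, f i := by
  intro k
  refine (hf.disjoint_biSup_biSup (s := g ⁻¹' {k}) (t := g ⁻¹' {k}ᶜ)
    (disjoint_compl_right.preimage g)).mono_right (iSup₂_le fun j hj => biSup_mono ?_)
  rintro i rfl
  exact hj

end Fibers

theorem DirectSum.IsInternal.biSup_fiber {R M ι κ : Type*} [Ring R] [AddCommGroup M] [Module R M]
    [DecidableEq ι] [DecidableEq κ] {p : ι → Submodule R M} (hp : DirectSum.IsInternal p)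
    (g : ι → κ) : DirectSum.IsInternal fun k => ⨆ i ∈ g ⁻¹' {k}, p i :=
  DirectSum.isInternal_submodule_of_iSupIndep_of_iSup_eq_top
    (hp.submodule_iSupIndep.biSup_fiber g)
    ((iSup_biSup_fiber p g).trans hp.submodule_iSup_eq_top)

theorem Submodule.mapsTo_biSup_fiber {R M ι κ : Type*} [Semiring R] [AddCommMonoid M]
    [Module R M]
    {p : ι → Submodule R M} {g : ι → κ} {f : M →ₗ[R] M} {σ : ι → ι} {τ : κ → κ}
    (hf : ∀ i, MapsTo f (p i) (p (σ i))) (hg : ∀ i, g (σ i) = τ (g i)) (k : κ) :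
    MapsTo f ↑(⨆ i ∈ g ⁻¹' {k}, p i) ↑(⨆ i ∈ g ⁻¹' {τ k}, p i : Submodule R M) := by
  have hle : (⨆ i ∈ g ⁻¹' {k}, p i) ≤ (⨆ i ∈ g ⁻¹' {τ k}, p i).comap f := by
    refine iSup₂_le fun i hi x hx => ?_
    have hσi : σ i ∈ g ⁻¹' {τ k} := by simp_all
    exact le_biSup p hσi (hf i hx)
  exact fun x hx => hle hx

/-- Let `V` be a finite-dimensional complex vector space, `φ` an endomorphism,
`t ≠ 0` not a root of unity.  If there is an invertible `ψ` with `ψ ∘ φ = t • (φ ∘ ψ)`, then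
`V` splits as an internal direct sum of finitely many nonzero `ψ`-invariant subspaces
`W i` (`i ∈ ℤ`) with `φ (W i) ⊆ W (i-1)`. -/
theorem statement1 {V : Type*} [AddCommGroup V] [Module ℂ V] [FiniteDimensional ℂ V]
    (φ : Module.End ℂ V) (t : ℂ) (ht : t ≠ 0)
    (htru : ∀ n : ℕ, 0 < n → t ^ n ≠ 1)
    (ψ : V ≃ₗ[ℂ] V)
    (h : ψ.toLinearMap * φ = t • (φ * ψ.toLinearMap)) :
    ∃ W : ℤ → Submodule ℂ V,
      {i : ℤ | W i ≠ ⊥}.Finite ∧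
      (∀ i : ℤ, ∀ v ∈ W i, ψ v ∈ W i) ∧
      DirectSum.IsInternal W ∧
      (∀ i : ℤ, ∀ v ∈ W i, φ v ∈ W (i - 1)) := by
  classical
  set u : ℂˣ := Units.mk0 t ht
  have hu : ¬IsOfFinOrder u⁻¹ := by
    rw [isOfFinOrder_inv_iff, isOfFinOrder_iff_pow_eq_one]
    rintro ⟨n, hn, hun⟩
    exact htru n hn (by simpa [u, Units.ext_iff] using hun)
  obtain ⟨F, hF⟩ := exists_map_mul_left_eq_add_one hu
  have hFu (μ : ℂˣ) : F (u * μ) = F μ - 1 := by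
    have := hF (u * μ)
    rw [inv_mul_cancel_left] at this
    omega
  let E : ℂˣ → Submodule ℂ V := fun μ =>
    Module.End.maxGenEigenspace (ψ : Module.End ℂ V) μ
  have hE : DirectSum.IsInternal E := by
    refine DirectSum.isInternal_submodule_of_iSupIndep_of_iSup_eq_top
      ((Module.End.independent_maxGenEigenspace _).comp Units.val_injective) ?_
    rw [eq_top_iff, ← Module.End.iSup_maxGenEigenspace_eq_top (ψ : Module.End ℂ V)]
    refine iSup_le fun μ => ?_
    rcases eq_or_ne μ 0 with rfl | hμ
    · simp [Module.End.maxGenEigenspace_zero_eq_bot_of_injective ψ.injective]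
    · exact le_iSup_of_le (Units.mk0 μ hμ) le_rfl
  have hW : DirectSum.IsInternal fun i => ⨆ μ ∈ F ⁻¹' {i}, E μ := hE.biSup_fiber F
  refine ⟨_, WellFoundedGT.finite_ne_bot_of_iSupIndep hW.submodule_iSupIndep, fun i => ?_, hW,
    fun i => ?_⟩
  · exact Submodule.mapsTo_biSup_fiber (p := E) (g := F) (σ := id) (τ := id)
      (fun μ => Module.End.mapsTo_maxGenEigenspace_of_comm (Commute.refl _) (μ : ℂ))
      (fun _ => rfl) i
  · refine Submodule.mapsTo_biSup_fiber (σ := (u * ·)) (τ := (· - 1)) (fun μ => ?_) hFu i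
    simpa [E, u] using Module.End.mapsTo_maxGenEigenspace_of_mul_eq_smul_mul h μ
end

section
/- Let V be a finite-dimensional complex vector space, φ a linear endomorphism of V, and t a nonzero complex number which is not a root of unity. If there exists an invertible linear endomorphism ψ of V with ψ ∘ φ = t · (φ ∘ ψ), then φ is nilpotent. -/
/-!
The relation says that `ψ⁻¹` carries a `μ`-eigenvector of `φ` to a `tμ`-eigenvector, so the
eigenvalues of `φ` are stable under multiplication by `t`. A nonzero eigenvalue `μ` would then give
the pairwise distinct eigenvalues `tⁿμ`, which is impossible in finite dimension. So `0` is the only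
eigenvalue of `φ`, and over the algebraically closed field `ℂ` this makes `φ` nilpotent.
-/

open Polynomial

namespace Module.End

variable {R M : Type*} [CommRing R] [AddCommGroup M] [Module R M]

theorem HasEigenvalue.mul_of_mul_eq_smul_mul {f : End R M} {ψ : M ≃ₗ[R] M} {t μ : R}
    (hψ : ψ.toLinearMap * f = t • (f * ψ.toLinearMap)) (hμ : f.HasEigenvalue μ) :
    f.HasEigenvalue (t * μ) := by
  obtain ⟨v, hv, hv0⟩ := hμ.exists_hasEigenvector
  have hfv : f v = μ • v := mem_eigenspace_iff.mp hv
  have hψv : ψ (f (ψ.symm v)) = (t * μ) • v := by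
    simpa [hfv, smul_smul] using LinearMap.congr_fun hψ (ψ.symm v)
  refine hasEigenvalue_of_hasEigenvector (x := ψ.symm v) ⟨?_, by simpa using hv0⟩
  rw [mem_eigenspace_iff, ← ψ.symm_apply_apply (f _), hψv, map_smul]

theorem HasEigenvalue.pow_mul_of_mul_eq_smul_mul {f : End R M} {ψ : M ≃ₗ[R] M} {t μ : R}
    (hψ : ψ.toLinearMap * f = t • (f * ψ.toLinearMap)) (hμ : f.HasEigenvalue μ) (n : ℕ) :
    f.HasEigenvalue (t ^ n * μ) := by
  induction n with
  | zero => simpa using hμ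
  | succ n ih => simpa [pow_succ', mul_assoc] using ih.mul_of_mul_eq_smul_mul hψ

end Module.End

theorem eq_zero_of_forall_pow_mul_mem {R : Type*} [CommRing R] [IsDomain R] {s : Set R}
    {t μ : R} (hs : s.Finite) (ht : t ≠ 0) (htru : ∀ n : ℕ, 0 < n → t ^ n ≠ 1)
    (hmem : ∀ n : ℕ, t ^ n * μ ∈ s) : μ = 0 := by
  by_contra hμ
  obtain ⟨m, n, hmn, hpow⟩ := hs.exists_lt_map_eq_of_forall_mem hmem
  refine htru (n - m) (Nat.sub_pos_of_lt hmn) (mul_left_cancel₀ (pow_ne_zero m ht) ?_)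
  rw [← pow_add, Nat.add_sub_cancel' hmn.le, mul_one]
  exact (mul_right_cancel₀ hμ hpow).symm

theorem Polynomial.Monic.eq_X_pow_of_forall_isRoot_eq_zero {K : Type*} [Field K] [IsAlgClosed K]
    {p : K[X]} (hp : p.Monic) (hroot : ∀ a, p.IsRoot a → a = 0) :
    p = X ^ p.roots.card := by
  have hroots : p.roots = Multiset.replicate p.roots.card 0 :=
    Multiset.eq_replicate.mpr ⟨rfl, fun a ha => hroot a (isRoot_of_mem_roots ha)⟩
  conv_lhs => rw [(IsAlgClosed.splits p).eq_prod_roots_of_monic hp, hroots]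
  simp

theorem Module.End.isNilpotent_of_forall_hasEigenvalue_eq_zero {K V : Type*} [Field K]
    [IsAlgClosed K] [AddCommGroup V] [Module K V] [FiniteDimensional K V] {f : End K V}
    (h : ∀ μ, f.HasEigenvalue μ → μ = 0) : IsNilpotent f := by
  have hmin := (minpoly.monic (Algebra.IsIntegral.isIntegral f)).eq_X_pow_of_forall_isRoot_eq_zero
    fun a ha => h a (hasEigenvalue_iff_isRoot.mpr ha)
  have hzero := minpoly.aeval K f
  rw [hmin, map_pow, aeval_X] at hzero
  exact ⟨_, hzero⟩

/-- Let `V` be a finite-dimensional complex vector space, `φ` an endomorphism,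
and `t ≠ 0` not a root of unity.  If there exists an invertible endomorphism `ψ` with
`ψ ∘ φ = t • (φ ∘ ψ)`, then `φ` is nilpotent. -/
theorem statement2 {V : Type*} [AddCommGroup V] [Module ℂ V] [FiniteDimensional ℂ V]
    (φ : Module.End ℂ V) (t : ℂ) (ht : t ≠ 0)
    (htru : ∀ n : ℕ, 0 < n → t ^ n ≠ 1)
    (h : ∃ ψ : V ≃ₗ[ℂ] V, ψ.toLinearMap * φ = t • (φ * ψ.toLinearMap)) :
    IsNilpotent φ := by
  obtain ⟨ψ, hψ⟩ := h
  refine Module.End.isNilpotent_of_forall_hasEigenvalue_eq_zero fun μ hμ => ?_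
  exact eq_zero_of_forall_pow_mul_mem φ.finite_hasEigenvalue ht htru
    (hμ.pow_mul_of_mul_eq_smul_mul hψ)
end

section
/- Let V be a finite-dimensional complex vector space and φ a linear endomorphism of V. Suppose there exist a nonzero complex number t which is not a root of unity and an invertible linear endomorphism ψ of V with ψ ∘ φ ∘ ψ⁻¹ = t·φ. Then there exists a group homomorphism Ψ : ℂˣ → GL(V) such that Ψ(s) ∘ φ ∘ Ψ(s)⁻¹ = s·φ for every s ∈ ℂˣ; moreover Ψ can be chosen so that V admits a direct sum decomposition V = ⨁_{i∈ℤ} W_i (all but finitely many W_i zero) on which Ψ(s) acts on W_i as multiplication by s^i. -/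
/-!
Write `g = ψ`, so that `g φ = t φ g`. Then `φ` maps the generalized eigenspace of `g` for `μ`
into the one for `t μ`, and `0` is not an eigenvalue of `g`. As `t` has infinite order in `ℂˣ`,
choosing a representative of each coset of `⟨t⟩` gives `D : ℂˣ → ℤ` with `D (t μ) = D μ + 1`.
Grouping the generalized eigenspaces by the value of `D` yields a grading `V = ⨁ W i` with
`φ (W i) ⊆ W (i + 1)`, and letting `s` act on `W i` as `s ^ i` gives the required action.
-/

open Module DirectSum

theorem exists_map_mul_eq_add_one_of_not_isOfFinOrder {G : Type*} [CommGroup G] {t : G}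
    (ht : ¬IsOfFinOrder t) : ∃ D : G → ℤ, ∀ g, D (t * g) = D g + 1 := by
  let rep : G → G := fun g => (QuotientGroup.mk g : G ⧸ Subgroup.zpowers t).out
  have hrep : ∀ g, ∃ n : ℤ, t ^ n = (rep g)⁻¹ * g := fun g =>
    Subgroup.mem_zpowers_iff.mp (QuotientGroup.eq.mp (QuotientGroup.out_eq' _))
  choose D hD using hrep
  refine ⟨D, fun g => injective_zpow_iff_not_isOfFinOrder.mpr ht ?_⟩
  have hrep_mul : rep (t * g) = rep g := by
    simp only [rep, QuotientGroup.mk_mul, (QuotientGroup.eq_one_iff t).mpr (Subgroup.mem_zpowers t),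
      one_mul]
  simp only [hD, hrep_mul, zpow_add_one]
  ac_rfl

theorem exists_map_mul_eq_add_one_of_pow_ne_one {G₀ : Type*} [CommGroupWithZero G₀] {t : G₀}
    (ht : t ≠ 0) (htru : ∀ n : ℕ, 0 < n → t ^ n ≠ 1) :
    ∃ D : G₀ → ℤ, ∀ μ ≠ 0, D (t * μ) = D μ + 1 := by
  classical
  have hfin : ¬IsOfFinOrder (Units.mk0 t ht) := by
    rw [isOfFinOrder_iff_pow_eq_one]
    rintro ⟨n, hn, htn⟩
    exact htru n hn (by simpa [Units.ext_iff] using htn)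
  obtain ⟨D, hD⟩ := exists_map_mul_eq_add_one_of_not_isOfFinOrder hfin
  refine ⟨fun μ => if hμ : μ = 0 then 0 else D (Units.mk0 μ hμ), fun μ hμ => ?_⟩
  simp only [mul_eq_zero, ht, hμ, or_self, dite_false, ← hD]
  exact congrArg D (Units.ext rfl)

theorem Module.End.mapsTo_maxGenEigenspace_of_mul_eq_smul_mul_s3 {R M : Type*} [CommRing R]
    [AddCommGroup M] [Module R M] {g φ : End R M} {t : R} (h : g * φ = t • (φ * g)) (μ : R) :
    Set.MapsTo φ (g.maxGenEigenspace μ) (g.maxGenEigenspace (t * μ)) := by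
  have hsemiconj : SemiconjBy φ (t • (g - μ • 1)) (g - (t * μ) • 1) := by
    rw [SemiconjBy, sub_mul, h, mul_smul_comm, mul_sub, smul_sub, smul_mul_assoc, one_mul,
      mul_smul_comm, mul_one, smul_smul]
  intro v hv
  obtain ⟨k, hk⟩ := (mem_maxGenEigenspace _ _ _).mp hv
  refine (mem_maxGenEigenspace _ _ _).mpr ⟨k, ?_⟩
  rw [← Module.End.mul_apply, ← (hsemiconj.pow_right k).eq, smul_pow, Module.End.mul_apply,
    LinearMap.smul_apply, hk, smul_zero, map_zero]

theorem Module.End.maxGenEigenspace_zero_eq_bot_of_isUnit {R M : Type*} [CommRing R]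
    [AddCommGroup M] [Module R M] {g : End R M} (hg : IsUnit g) : g.maxGenEigenspace 0 = ⊥ := by
  refine eq_bot_iff.mpr fun v hv => ?_
  obtain ⟨k, hk⟩ := (mem_maxGenEigenspace _ _ _).mp hv
  rw [zero_smul, sub_zero] at hk
  exact ((Module.End.isUnit_iff _).mp (hg.pow k)).1 (hk.trans (map_zero _).symm)

section Fiber

variable {α ι κ : Type*} [CompleteLattice α]

theorem iSup_iSup_fiber (f : ι → α) (D : ι → κ) :
    ⨆ (k) (i) (_ : D i = k), f i = ⨆ i, f i := by
  rw [iSup_comm]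
  simp only [iSup_iSup_eq_right]

theorem iSupIndep.iSup_fiber [IsModularLattice α] [IsCompactlyGenerated α] {f : ι → α}
    (hf : iSupIndep f) (D : ι → κ) : iSupIndep fun k => ⨆ (i) (_ : D i = k), f i := by
  intro k
  have hrest : ⨆ (l) (_ : l ≠ k) (i) (_ : D i = l), f i = ⨆ i ∈ {i | D i ≠ k}, f i := by
    refine le_antisymm (iSup₂_le fun l hl => iSup₂_le fun i hi => ?_)
      (iSup₂_le fun i hi => le_iSup₂_of_le (D i) hi (le_iSup₂_of_le i rfl le_rfl))
    exact le_biSup f (show D i ≠ k from hi ▸ hl)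
  rw [hrest]
  exact hf.disjoint_biSup_biSup (Set.disjoint_left.mpr fun i hi hi' => hi' hi)

theorem Set.Finite.iSup_fiber_ne_bot {f : ι → α} (hf : {i | f i ≠ ⊥}.Finite) (D : ι → κ) :
    {k | ⨆ (i) (_ : D i = k), f i ≠ ⊥}.Finite := by
  refine (hf.image D).subset fun k hk => ?_
  by_contra hnot
  refine hk (iSup₂_eq_bot.mpr fun i hi => ?_)
  by_contra hne
  exact hnot ⟨i, hne, hi⟩

end Fiber

theorem LinearMap.ext_of_iSup_eq_top {R M N ι : Type*} [Semiring R] [AddCommMonoid M]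
    [AddCommMonoid N] [Module R M] [Module R N] {W : ι → Submodule R M} (hW : ⨆ i, W i = ⊤)
    {f g : M →ₗ[R] N} (h : ∀ i, ∀ v ∈ W i, f v = g v) : f = g := by
  ext v
  have hle : ⨆ i, W i ≤ LinearMap.eqLocus f g := iSup_le h
  exact hle (hW ▸ Submodule.mem_top)

namespace DirectSum.IsInternal

variable {K M : Type*} [Field K] [AddCommGroup M] [Module K M] {W : ℤ → Submodule K M}

noncomputable def zpowSMul (hW : IsInternal W) (s : K) : End K M :=
  toModule K ℤ M (fun i => s ^ i • (W i).subtype) ∘ₗ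
    (LinearEquiv.ofBijective (coeLinearMap W) hW).symm.toLinearMap

theorem zpowSMul_apply_of_mem (hW : IsInternal W) (s : K) {i : ℤ} {v : M} (hv : v ∈ W i) :
    hW.zpowSMul s v = s ^ i • v := by
  have hdecomp : (LinearEquiv.ofBijective (coeLinearMap W) hW).symm v = lof K ℤ _ i ⟨v, hv⟩ := by
    rw [LinearEquiv.symm_apply_eq, lof_eq_of]
    exact (coeLinearMap_of W i ⟨v, hv⟩).symm
  simp only [zpowSMul, LinearMap.coe_comp, LinearEquiv.coe_coe, Function.comp_apply, hdecomp,
    toModule_lof, LinearMap.smul_apply, Submodule.subtype_apply]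

noncomputable def zpowSMulHom (hW : IsInternal W) : K →* End K M where
  toFun := hW.zpowSMul
  map_one' := LinearMap.ext_of_iSup_eq_top hW.submodule_iSup_eq_top fun i v hv => by
    rw [zpowSMul_apply_of_mem hW 1 hv, one_zpow, one_smul, Module.End.one_apply]
  map_mul' s s' := LinearMap.ext_of_iSup_eq_top hW.submodule_iSup_eq_top fun i v hv => by
    rw [zpowSMul_apply_of_mem hW _ hv, Module.End.mul_apply, zpowSMul_apply_of_mem hW _ hv,
      zpowSMul_apply_of_mem hW _ (Submodule.smul_mem _ _ hv), mul_zpow, mul_smul]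

theorem zpowSMulHom_apply (hW : IsInternal W) (s : K) : hW.zpowSMulHom s = hW.zpowSMul s := rfl

theorem zpowSMulHom_mul_eq_smul_mul (hW : IsInternal W) {φ : End K M}
    (hφ : ∀ i, Set.MapsTo φ (W i) (W (i + 1))) {s : K} (hs : s ≠ 0) :
    hW.zpowSMulHom s * φ = s • (φ * hW.zpowSMulHom s) :=
  LinearMap.ext_of_iSup_eq_top hW.submodule_iSup_eq_top fun i v hv => by
    rw [zpowSMulHom_apply, Module.End.mul_apply, zpowSMul_apply_of_mem hW s (hφ i hv),
      LinearMap.smul_apply, Module.End.mul_apply, zpowSMul_apply_of_mem hW s hv, map_smul,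
      zpow_add_one₀ hs, mul_comm, mul_smul]

theorem exists_unitsHom_conj_eq_smul (hW : IsInternal W) (hfin : {i | W i ≠ ⊥}.Finite)
    {φ : End K M} (hφ : ∀ i, Set.MapsTo φ (W i) (W (i + 1))) :
    ∃ Ψ : Kˣ →* (End K M)ˣ,
      (∀ s : Kˣ, (Ψ s : End K M) * φ * (((Ψ s)⁻¹ : (End K M)ˣ) : End K M) = (s : K) • φ) ∧
      ∃ W : ℤ → Submodule K M,
        {i : ℤ | W i ≠ ⊥}.Finite ∧
        DirectSum.IsInternal W ∧
        ∀ (s : Kˣ) (i : ℤ), ∀ v ∈ W i, (Ψ s : End K M) v = ((s : K) ^ i) • v := by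
  refine ⟨Units.map hW.zpowSMulHom, fun s => ?_, W, hfin, hW,
    fun s i v hv => hW.zpowSMul_apply_of_mem s hv⟩
  change hW.zpowSMulHom s * φ * hW.zpowSMulHom ↑s⁻¹ = (s : K) • φ
  rw [hW.zpowSMulHom_mul_eq_smul_mul hφ s.ne_zero, smul_mul_assoc, mul_assoc, ← map_mul,
    Units.mul_inv, map_one, mul_one]

end DirectSum.IsInternal

/-- Let `V` be a finite-dimensional complex vector space and `φ` an endomorphism.
Suppose there are `t ≠ 0` not a root of unity and an invertible `ψ` with `ψ ∘ φ ∘ ψ⁻¹ = t • φ`.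
Then there is a group homomorphism `Ψ : ℂˣ → GL(V)` with `Ψ s ∘ φ ∘ (Ψ s)⁻¹ = s • φ` for all
`s`, which moreover can be chosen so that `V = ⨁_{i ∈ ℤ} W i` (all but finitely many `W i`
zero) with `Ψ s` acting on `W i` as multiplication by `s ^ i`. -/
theorem statement3 {V : Type*} [AddCommGroup V] [Module ℂ V] [FiniteDimensional ℂ V]
    (φ : Module.End ℂ V) (t : ℂ) (ht : t ≠ 0)
    (htru : ∀ n : ℕ, 0 < n → t ^ n ≠ 1)
    (ψ : (Module.End ℂ V)ˣ)
    (h : (ψ : Module.End ℂ V) * φ * ((ψ⁻¹ : (Module.End ℂ V)ˣ) : Module.End ℂ V) = t • φ) :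
    ∃ Ψ : ℂˣ →* (Module.End ℂ V)ˣ,
      (∀ s : ℂˣ, (Ψ s : Module.End ℂ V) * φ * (((Ψ s)⁻¹ : (Module.End ℂ V)ˣ) : Module.End ℂ V)
        = (s : ℂ) • φ) ∧
      ∃ W : ℤ → Submodule ℂ V,
        {i : ℤ | W i ≠ ⊥}.Finite ∧
        DirectSum.IsInternal W ∧
        ∀ (s : ℂˣ) (i : ℤ), ∀ v ∈ W i, (Ψ s : Module.End ℂ V) v = ((s : ℂ) ^ i) • v := by
  have hψφ : (ψ : End ℂ V) * φ = t • (φ * ψ) := by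
    rw [← smul_mul_assoc, ← h, mul_assoc _ _ (ψ : End ℂ V), Units.inv_mul, mul_one]
  obtain ⟨D, hD⟩ := exists_map_mul_eq_add_one_of_pow_ne_one ht htru
  set E := (ψ : End ℂ V).maxGenEigenspace
  have hE : iSupIndep E := Module.End.independent_maxGenEigenspace _
  set W : ℤ → Submodule ℂ V := fun i => ⨆ (μ) (_ : D μ = i), E μ
  have hW : IsInternal W := isInternal_submodule_of_iSupIndep_of_iSup_eq_top (hE.iSup_fiber D)
    ((iSup_iSup_fiber E D).trans (Module.End.iSup_maxGenEigenspace_eq_top _))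
  refine hW.exists_unitsHom_conj_eq_smul
    ((WellFoundedGT.finite_ne_bot_of_iSupIndep hE).iSup_fiber_ne_bot D) fun i => ?_
  change W i ≤ (W (i + 1)).comap φ
  refine iSup₂_le fun μ hμ => ?_
  rcases eq_or_ne μ 0 with rfl | hμ0
  · simp only [E, Module.End.maxGenEigenspace_zero_eq_bot_of_isUnit ψ.isUnit, bot_le]
  · have hle : E (t * μ) ≤ W (i + 1) :=
      le_iSup₂_of_le (f := fun ν (_ : D ν = i + 1) => E ν) (t * μ) (by rw [hD μ hμ0, hμ]) le_rfl
    exact fun v hv => hle (Module.End.mapsTo_maxGenEigenspace_of_mul_eq_smul_mul_s3 hψφ μ hv)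
end

section
/- Let g ≥ 1 be an integer, let φ be a nonzero traceless 2×2 complex matrix, and let A₁,…,A_g, B₁,…,B_g be traceless 2×2 complex matrices. Then the following are equivalent: (i) for every traceless 2×2 complex matrix a and every index i one has trace(φ·(a·B_i − B_i·a)) = 0 and trace(φ·(A_i·a − a·A_i)) = 0, and for every traceless 2×2 complex matrix ψ one has trace(ψ·Σ_{i=1}^{g}(A_i·B_i − B_i·A_i)) = 0; (ii) every A_i and every B_i is a complex scalar multiple of φ. -/
/-!
Moving `a` across the trace turns `tr (φ [Y, a])` into `tr ([φ, Y] a)`; since the trace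
form is nondegenerate on `sl₂` (in characteristic `≠ 2`), the derivatives in the `Aᵢ` and
`Bᵢ` directions vanish exactly when every `Aᵢ`, `Bᵢ` commutes with `φ`. Identifying `sl₂` with
`K³`, commutators become cross products, so a traceless matrix commuting with `φ ≠ 0` is a
multiple of `φ`. The derivative in the `φ` direction then vanishes automatically, because
multiples of `φ` commute with each other.
-/

namespace Matrix

theorem trace_mul_commutator {n R : Type*} [Fintype n] [CommRing R] (X Y a : Matrix n n R) :
    (X * (Y * a - a * Y)).trace = ((X * Y - Y * X) * a).trace := by
  rw [mul_sub, sub_mul, trace_sub, trace_sub, ← mul_assoc, ← mul_assoc, trace_mul_cycle X a Y]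

variable {K : Type*} [Field K]

/-- The coordinates `(x, y, z)` of a traceless matrix `!![x, y; z, -x]`. -/
def sl2Coords (X : Matrix (Fin 2) (Fin 2) K) : Fin 3 → K := ![X 0 0, X 0 1, X 1 0]

theorem sl2Coords_smul (c : K) (X : Matrix (Fin 2) (Fin 2) K) :
    sl2Coords (c • X) = c • sl2Coords X := by
  ext i
  fin_cases i <;> simp [sl2Coords]

theorem eq_of_sl2Coords_eq {X Y : Matrix (Fin 2) (Fin 2) K} (hX : X.trace = 0)
    (hY : Y.trace = 0) (h : sl2Coords X = sl2Coords Y) : X = Y := by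
  rw [trace_fin_two] at hX hY
  obtain ⟨h00, h01, h10⟩ : X 0 0 = Y 0 0 ∧ X 0 1 = Y 0 1 ∧ X 1 0 = Y 1 0 := by
    simpa only [sl2Coords, Fin.forall_fin_succ, Fin.isValue, cons_val_zero, cons_val_succ,
      cons_val_fin_one, forall_const] using congrFun h
  have h11 : X 1 1 = Y 1 1 := by linear_combination hX - hY - h00
  rw [eta_fin_two X, eta_fin_two Y, h00, h01, h10, h11]

variable [NeZero (2 : K)]

theorem eq_zero_of_trace_mul_eq_zero {M : Matrix (Fin 2) (Fin 2) K} (hM : M.trace = 0)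
    (h : ∀ a : Matrix (Fin 2) (Fin 2) K, a.trace = 0 → (M * a).trace = 0) : M = 0 := by
  have h01 := h !![0, 0; 1, 0] (by simp [trace_fin_two])
  have h10 := h !![0, 1; 0, 0] (by simp [trace_fin_two])
  have hdiag := h !![1, 0; 0, -1] (by simp [trace_fin_two])
  simp only [trace_fin_two, mul_apply, Fin.sum_univ_two, Fin.isValue, of_apply, cons_val',
    cons_val_zero, cons_val_one, cons_val_fin_one, mul_zero, mul_one, zero_add, add_zero, mul_neg]
    at h01 h10 hdiag hM
  have h00 : M 0 0 = 0 := mul_left_cancel₀ two_ne_zero (by linear_combination hM + hdiag)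
  have h11 : M 1 1 = 0 := mul_left_cancel₀ two_ne_zero (by linear_combination hM - hdiag)
  ext i j
  fin_cases i <;> fin_cases j <;> simp [h00, h01, h10, h11]

theorem forall_trace_mul_commutator_eq_zero_iff (X Y : Matrix (Fin 2) (Fin 2) K) :
    (∀ a : Matrix (Fin 2) (Fin 2) K, a.trace = 0 → (X * (Y * a - a * Y)).trace = 0) ↔
      Commute X Y := by
  simp_rw [trace_mul_commutator]
  refine ⟨fun h ↦ sub_eq_zero.mp (eq_zero_of_trace_mul_eq_zero ?_ h), fun h a _ ↦ ?_⟩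
  · rw [trace_sub, trace_mul_comm, sub_self]
  · rw [h.eq, sub_self, zero_mul, trace_zero]

/-- For traceless `X`, `Y` the entries of `X * Y - Y * X` are, up to factors of `2`, the components
of `sl2Coords X ⨯₃ sl2Coords Y`. -/
theorem crossProduct_sl2Coords_eq_zero {X Y : Matrix (Fin 2) (Fin 2) K} (hX : X.trace = 0)
    (hY : Y.trace = 0) (h : Commute X Y) : crossProduct (sl2Coords X) (sl2Coords Y) = 0 := by
  rw [trace_fin_two] at hX hY
  obtain ⟨⟨e00, e01⟩, e10, -⟩ := by
    simpa only [mul_apply, Fin.sum_univ_two, Fin.isValue, Fin.forall_fin_two] using congrFun₂ h.eq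
  ext i
  fin_cases i <;>
    simp only [sl2Coords, cross_apply, Fin.isValue, Fin.zero_eta, Fin.mk_one, Fin.reduceFinMk,
      cons_val_zero, cons_val_one, cons_val, Pi.zero_apply]
  · linear_combination e00
  · exact mul_left_cancel₀ two_ne_zero (by linear_combination e10 + X 1 0 * hY - Y 1 0 * hX)
  · exact mul_left_cancel₀ two_ne_zero (by linear_combination e01 - X 0 1 * hY + Y 0 1 * hX)

theorem commute_iff_exists_eq_smul {φ X : Matrix (Fin 2) (Fin 2) K} (hφtr : φ.trace = 0)
    (hφ : φ ≠ 0) (hX : X.trace = 0) : Commute φ X ↔ ∃ c : K, X = c • φ := by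
  refine ⟨fun h ↦ ?_, fun ⟨c, hc⟩ ↦ hc ▸ (Commute.refl φ).smul_right c⟩
  have hφ' : sl2Coords φ ≠ 0 := fun h0 ↦
    hφ (eq_of_sl2Coords_eq hφtr (trace_zero _ _) (by rw [h0]; ext i; fin_cases i <;> rfl))
  obtain ⟨c, hc⟩ : ∃ c : K, c • sl2Coords φ = sl2Coords X := by
    by_contra! hind
    exact crossProduct_ne_zero_iff_linearIndependent.mpr
      ((LinearIndependent.pair_iff' hφ').mpr hind) (crossProduct_sl2Coords_eq_zero hφtr hX h)
  refine ⟨c, eq_of_sl2Coords_eq hX ?_ ?_⟩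
  · rw [trace_smul, hφtr, smul_zero]
  · rw [sl2Coords_smul, hc]

end Matrix

theorem statement5_general (g : ℕ)
    (φ : Matrix (Fin 2) (Fin 2) ℂ) (hφtr : φ.trace = 0) (hφ : φ ≠ 0)
    (A B : Fin g → Matrix (Fin 2) (Fin 2) ℂ)
    (hA : ∀ i, (A i).trace = 0) (hB : ∀ i, (B i).trace = 0) :
    ((∀ a : Matrix (Fin 2) (Fin 2) ℂ, a.trace = 0 → ∀ i : Fin g,
        (φ * (a * B i - B i * a)).trace = 0 ∧ (φ * (A i * a - a * A i)).trace = 0) ∧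
      (∀ ψ : Matrix (Fin 2) (Fin 2) ℂ, ψ.trace = 0 →
        (ψ * ∑ i : Fin g, (A i * B i - B i * A i)).trace = 0))
    ↔ (∀ i : Fin g, (∃ c : ℂ, A i = c • φ) ∧ (∃ c : ℂ, B i = c • φ)) := by
  have trace_swap (Y a : Matrix (Fin 2) (Fin 2) ℂ) :
      (φ * (a * Y - Y * a)).trace = -(φ * (Y * a - a * Y)).trace := by
    rw [← Matrix.trace_neg, ← mul_neg, neg_sub]
  have critical_iff {Y : Matrix (Fin 2) (Fin 2) ℂ} (hY : Y.trace = 0) :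
      (∀ a : Matrix (Fin 2) (Fin 2) ℂ, a.trace = 0 → (φ * (Y * a - a * Y)).trace = 0) ↔
        ∃ c : ℂ, Y = c • φ :=
    (Matrix.forall_trace_mul_commutator_eq_zero_iff φ Y).trans
      (Matrix.commute_iff_exists_eq_smul hφtr hφ hY)
  constructor
  · rintro ⟨h, -⟩ i
    refine ⟨(critical_iff (hA i)).1 fun a ha ↦ (h a ha i).2, (critical_iff (hB i)).1 fun a ha ↦ ?_⟩
    rw [← neg_eq_zero, ← trace_swap]
    exact (h a ha i).1
  · intro h
    refine ⟨fun a ha i ↦ ⟨?_, (critical_iff (hA i)).2 (h i).1 a ha⟩, fun ψ _ ↦ ?_⟩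
    · rw [trace_swap, (critical_iff (hB i)).2 (h i).2 a ha, neg_zero]
    have hAB (i : Fin g) : A i * B i - B i * A i = 0 := by
      obtain ⟨⟨c, hc⟩, d, hd⟩ := h i
      rw [hc, hd, sub_eq_zero]
      exact (((Commute.refl φ).smul_left c).smul_right d).eq
    rw [Finset.sum_eq_zero fun i _ ↦ hAB i, mul_zero, Matrix.trace_zero]

/-- Critical points of `f(A,φ) = tr(φ · Σᵢ [Aᵢ,Bᵢ])` on `sl₂(ℂ)^{2g} × sl₂(ℂ)`
at a point with `φ ≠ 0`: the vanishing of all derivatives is equivalent to every `Aᵢ` and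
every `Bᵢ` being a scalar multiple of `φ`. -/
theorem statement5 (g : ℕ) (hg : 1 ≤ g)
    (φ : Matrix (Fin 2) (Fin 2) ℂ) (hφtr : φ.trace = 0) (hφ : φ ≠ 0)
    (A B : Fin g → Matrix (Fin 2) (Fin 2) ℂ)
    (hA : ∀ i, (A i).trace = 0) (hB : ∀ i, (B i).trace = 0) :
    ((∀ a : Matrix (Fin 2) (Fin 2) ℂ, a.trace = 0 → ∀ i : Fin g,
        (φ * (a * B i - B i * a)).trace = 0 ∧ (φ * (A i * a - a * A i)).trace = 0) ∧
      (∀ ψ : Matrix (Fin 2) (Fin 2) ℂ, ψ.trace = 0 →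
        (ψ * ∑ i : Fin g, (A i * B i - B i * A i)).trace = 0))
    ↔ (∀ i : Fin g, (∃ c : ℂ, A i = c • φ) ∧ (∃ c : ℂ, B i = c • φ)) :=
  statement5_general g φ hφtr hφ A B hA hB
end

section
/- Let N ≥ 1 be an integer, let λ₀,…,λ_{N−1} be pairwise distinct complex numbers, and let t be any complex number. Then Σ_{i=0}^{N−1} ∏_{j≠i} (λ_i − λ_j + t)/(λ_j − λ_i) = (−1)^{N−1}·N. -/
/-!
Put `p = ∏ⱼ (X - λⱼ + t) - ∏ⱼ (X - λⱼ)`. It has degree `< N`, its coefficient of `X ^ (N - 1)` is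
`N t`, and `p(λᵢ) = t ∏_{j ≠ i} (λᵢ - λⱼ + t)`. Lagrange interpolation at the nodes `λᵢ` reads off
that coefficient as `∑ᵢ p(λᵢ) / ∏_{j ≠ i} (λᵢ - λⱼ)`; dividing by `t` gives
`∑ᵢ ∏_{j ≠ i} (λᵢ - λⱼ + t) / (λᵢ - λⱼ) = N`, and flipping the `N - 1` denominators gives the sign.
-/

open Finset Polynomial

namespace Lagrange

variable {F ι : Type*} [Field F] {s : Finset ι} {v : ι → F}

theorem degree_nodal_sub_nodal_lt (s : Finset ι) (v w : ι → F) :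
    (nodal s v - nodal s w).degree < #s := by
  simpa only [degree_nodal] using degree_sub_lt_left (p := nodal s v) (q := nodal s w)
    (by rw [degree_nodal, degree_nodal]) nodal_ne_zero
    (by rw [nodal_monic.leadingCoeff, nodal_monic.leadingCoeff])

theorem coeff_nodal_card_pred (hs : s.Nonempty) :
    (nodal s v).coeff (#s - 1) = -∑ i ∈ s, v i := by
  rw [nodal_eq, prod_X_sub_C_coeff_card_pred s v hs.card_pos]

variable [DecidableEq ι]

theorem prod_erase_sub_ne_zero (hvs : Set.InjOn v s) {i : ι} (hi : i ∈ s) :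
    ∏ j ∈ s.erase i, (v i - v j) ≠ 0 := by
  refine prod_ne_zero_iff.2 fun j hj => sub_ne_zero.2 fun hij => ?_
  exact (mem_erase.1 hj).1 (hvs (mem_erase.1 hj).2 hi hij.symm)

theorem eval_nodal_sub_sub_nodal (t : F) {i : ι} (hi : i ∈ s) :
    (nodal s (fun j => v j - t) - nodal s v).eval (v i) =
      t * ∏ j ∈ s.erase i, (v i - v j + t) := by
  rw [eval_sub, eval_nodal_at_node hi, sub_zero, eval_nodal, ← mul_prod_erase _ _ hi]
  congr 1
  · ring
  · exact prod_congr rfl fun j _ => by ring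

theorem sum_prod_sub_add_div_prod_sub (hvs : Set.InjOn v s) (t : F) :
    ∑ i ∈ s, (∏ j ∈ s.erase i, (v i - v j + t)) / ∏ j ∈ s.erase i, (v i - v j) = #s := by
  rcases eq_or_ne t 0 with rfl | ht
  · simp only [add_zero]
    rw [sum_congr rfl fun i hi => div_self (prod_erase_sub_ne_zero hvs hi)]
    simp
  rcases s.eq_empty_or_nonempty with rfl | hs
  · simp
  set p := nodal s (fun j => v j - t) - nodal s v
  have hcoeff : p.coeff (#s - 1) = t * #s := by
    rw [coeff_sub, coeff_nodal_card_pred hs, coeff_nodal_card_pred hs, sum_sub_distrib]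
    simp [mul_comm]
  refine mul_left_cancel₀ ht ?_
  calc t * ∑ i ∈ s, (∏ j ∈ s.erase i, (v i - v j + t)) / ∏ j ∈ s.erase i, (v i - v j)
      = ∑ i ∈ s, p.eval (v i) / ∏ j ∈ s.erase i, (v i - v j) := by
        rw [mul_sum]
        exact sum_congr rfl fun i hi => by rw [eval_nodal_sub_sub_nodal t hi, mul_div_assoc]
    _ = p.coeff (#s - 1) := (coeff_eq_sum hvs (degree_nodal_sub_nodal_lt s _ v)).symm
    _ = t * #s := hcoeff

end Lagrange

theorem statement13_general (N : ℕ) (l : Fin N → ℂ)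
    (hl : Function.Injective l) (t : ℂ) :
    ∑ i : Fin N, ∏ j ∈ Finset.univ.erase i, (l i - l j + t) / (l j - l i)
      = (-1 : ℂ) ^ (N - 1) * N := by
  have hflip : ∀ i : Fin N, ∏ j ∈ univ.erase i, (l i - l j + t) / (l j - l i) =
      (-1) ^ (N - 1) * ((∏ j ∈ univ.erase i, (l i - l j + t)) / ∏ j ∈ univ.erase i, (l i - l j)) := by
    intro i
    have hcard : #(univ.erase i) = N - 1 := by simp [card_erase_of_mem]
    simp_rw [← neg_sub (l i), prod_div_distrib, prod_neg, hcard]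
    rw [div_mul_eq_div_div_swap, div_eq_mul_inv _ ((-1 : ℂ) ^ _), ← inv_pow, inv_neg, inv_one, mul_comm]
  rw [sum_congr rfl fun i _ => hflip i, ← mul_sum,
    Lagrange.sum_prod_sub_add_div_prod_sub hl.injOn, card_univ, Fintype.card_fin]

/-- for pairwise distinct `λ₀,…,λ_{N−1} ∈ ℂ` and any `t ∈ ℂ`,
`Σᵢ ∏_{j≠i} (λᵢ − λⱼ + t)/(λⱼ − λᵢ) = (−1)^{N−1} N` (equivariant localisation of
`∫_{ℙ^{N−1}} e(T*ℙ ⊗ t)`). -/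
theorem statement13 (N : ℕ) (hN : 1 ≤ N) (l : Fin N → ℂ)
    (hl : Function.Injective l) (t : ℂ) :
    ∑ i : Fin N, ∏ j ∈ Finset.univ.erase i, (l i - l j + t) / (l j - l i)
      = (-1 : ℂ) ^ (N - 1) * N :=
  statement13_general N l hl t
end
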